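/- arXiv:0808.3494 — 4 statements merged into one kernel-verified Lean document; each statement's English description precedes it below -/
import Mathlib

section
/- Let (f_n) be a sequence in D such that ∑_{x∈ℕ*} f_n(x)² γ(x) → 0 as n → ∞, and such that E(f_n − f_m, f_n − f_m) → 0 as n, m → ∞. Then f_n(∞) → 0 and E(f_n, f_n) → 0 as n → ∞; in other words, the form (E, D) is complete (closed) on L²(ℕ̄*, γ). -/
open Filter Topology

/-!
Since the weights `γ` are strictly positive, convergence of `∑ f_n² γ` to `0` forces `f_n(x) → 0`
at every point. The functions `f_n - f_n(∞)` form a Cauchy sequence in `ℓ²`, so they converge in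
`ℓ²`, hence pointwise, to some `H`. Then `f_n(∞) → -H(x)` for every `x`, so `H` is constant, and
a constant function in `ℓ²(ℕ)` vanishes.
-/

section SquareSummable

variable {ι : Type*}

lemma memℓp_two_iff_summable_sq {g : ι → ℝ} : Memℓp g 2 ↔ Summable fun i => g i ^ 2 := by
  rw [memℓp_gen_iff (by norm_num)]
  norm_num [Real.norm_eq_abs, sq_abs]

lemma lp.norm_sq_eq_tsum_sq (G : lp (fun _ : ι => ℝ) 2) : ‖G‖ ^ 2 = ∑' i, G i ^ 2 := by
  rw [← real_inner_self_eq_norm_sq, lp.inner_eq_tsum]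
  simp [sq]

lemma lp.cauchySeq_of_tsum_sq_sub {G : ℕ → lp (fun _ : ι => ℝ) 2}
    (h : ∀ ε > 0, ∃ N, ∀ n ≥ N, ∀ m ≥ N, ∑' i, (G n i - G m i) ^ 2 < ε) : CauchySeq G := by
  refine Metric.cauchySeq_iff'.2 fun ε hε => ?_
  obtain ⟨N, hN⟩ := h (ε ^ 2) (by positivity)
  refine ⟨N, fun n hn => lt_of_pow_lt_pow_left₀ 2 hε.le ?_⟩
  rw [dist_eq_norm, lp.norm_sq_eq_tsum_sq]
  exact hN n hn N le_rfl

lemma eq_zero_of_memℓp_two_const [Infinite ι] {c : ℝ} (h : Memℓp (fun _ : ι => c) 2) : c = 0 :=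
  pow_eq_zero_iff two_ne_zero |>.1 <| (summable_const_iff _).1 (memℓp_two_iff_summable_sq.1 h)

end SquareSummable

section WeightedSquares

variable {ι : Type*} {γ : ι → ℝ}

lemma summable_sq_mul_of_summable_sub_sq (hγ0 : ∀ x, 0 ≤ γ x) (hγ : Summable γ)
    {u : ι → ℝ} {a : ℝ} (hu : Summable fun x => (u x - a) ^ 2) :
    Summable fun x => u x ^ 2 * γ x := by
  refine .of_nonneg_of_le (fun x => mul_nonneg (sq_nonneg _) (hγ0 x)) (fun x => ?_)
    ((hu.mul_left (2 * ∑' y, γ y)).add (hγ.mul_left (2 * a ^ 2)))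
  have hγx : γ x ≤ ∑' y, γ y := hγ.le_tsum x fun y _ => hγ0 y
  have hsq : u x ^ 2 ≤ 2 * (u x - a) ^ 2 + 2 * a ^ 2 := by nlinarith [sq_nonneg (u x - 2 * a)]
  calc u x ^ 2 * γ x ≤ (2 * (u x - a) ^ 2 + 2 * a ^ 2) * γ x := by gcongr; exact hγ0 x
    _ ≤ 2 * (∑' y, γ y) * (u x - a) ^ 2 + 2 * a ^ 2 * γ x := by nlinarith [sq_nonneg (u x - a)]

lemma tendsto_apply_of_tendsto_tsum_sq_mul {α : Type*} {l : Filter α} (hγ : ∀ x, 0 < γ x)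
    {u : α → ι → ℝ} (hu : ∀ n, Summable fun x => u n x ^ 2 * γ x)
    (h : Tendsto (fun n => ∑' x, u n x ^ 2 * γ x) l (𝓝 0)) (x : ι) :
    Tendsto (fun n => u n x) l (𝓝 0) := by
  have hterm : Tendsto (fun n => u n x ^ 2 * γ x) l (𝓝 0) :=
    squeeze_zero (fun n => mul_nonneg (sq_nonneg _) (hγ x).le)
      (fun n => (hu n).le_tsum x fun y _ => mul_nonneg (sq_nonneg _) (hγ y).le) h
  have hsq : Tendsto (fun n => u n x ^ 2) l (𝓝 0) := by
    simpa [mul_assoc, mul_inv_cancel₀ (hγ x).ne'] using hterm.mul_const (γ x)⁻¹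
  rw [tendsto_zero_iff_abs_tendsto_zero]
  simpa [Function.comp_def, Real.sqrt_sq_eq_abs] using hsq.sqrt

end WeightedSquares

/-- The state space `ℕ̄* = ℕ* ∪ {∞}` is encoded by giving, for each `n`, the values
`f n : ℕ → ℝ` of the `n`-th function at the points of `ℕ*` (relabelled by `ℕ`) together with
its value `fInf n` at `∞`.  Membership in `D` is the summability of `x ↦ (f n x - fInf n)²`,
and `E(g, g) = ∑_x (g x - g ∞)²`. -/
theorem stmt_0 (γ : ℕ → ℝ) (hγpos : ∀ x, 0 < γ x) (hγsum : Summable γ)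
    (f : ℕ → ℕ → ℝ) (fInf : ℕ → ℝ)
    (hD : ∀ n, Summable fun x => (f n x - fInf n) ^ 2)
    (hL2 : Tendsto (fun n => ∑' x : ℕ, (f n x) ^ 2 * γ x) atTop (𝓝 0))
    (hCauchy : ∀ ε : ℝ, 0 < ε → ∃ N : ℕ, ∀ n ≥ N, ∀ m ≥ N,
      (∑' x : ℕ, ((f n x - fInf n) - (f m x - fInf m)) ^ 2) < ε) :
    Tendsto fInf atTop (𝓝 0) ∧
      Tendsto (fun n => ∑' x : ℕ, (f n x - fInf n) ^ 2) atTop (𝓝 0) := by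
  have hf : ∀ x, Tendsto (fun n => f n x) atTop (𝓝 0) :=
    tendsto_apply_of_tendsto_tsum_sq_mul hγpos
      (fun n => summable_sq_mul_of_summable_sub_sq (fun x => (hγpos x).le) hγsum (hD n)) hL2
  let G : ℕ → lp (fun _ : ℕ => ℝ) 2 := fun n =>
    ⟨fun x => f n x - fInf n, memℓp_two_iff_summable_sq.2 (hD n)⟩
  obtain ⟨H, hGH⟩ := cauchySeq_tendsto_of_complete (lp.cauchySeq_of_tsum_sq_sub (G := G) hCauchy)
  have hfInf : ∀ x, Tendsto fInf atTop (𝓝 (-H x)) := fun x => by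
    simpa [G] using (hf x).sub (((lp.lipschitzWith_one_eval 2 x).continuous.tendsto H).comp hGH)
  have hH_const : (H : ℕ → ℝ) = fun _ => H 0 :=
    funext fun x => neg_injective (tendsto_nhds_unique (hfInf x) (hfInf 0))
  have hH0 : H 0 = 0 := eq_zero_of_memℓp_two_const (hH_const ▸ H.2)
  have hH : H = 0 := lp.ext (hH_const.trans (funext fun _ => hH0))
  refine ⟨by simpa [hH0] using hfInf 0, ?_⟩
  simpa [hH, G, lp.norm_sq_eq_tsum_sq] using (hGH.norm.pow 2)
end

section
/- Fix λ > 0, a finite nonempty set A ⊂ ℕ* with |A| = n, and f : A → ℝ. Among all u ∈ D with u(x) = f(x) for every x ∈ A, the quantity ∑_{x∈ℕ*} (u(x) − u(∞))² + λ ∑_{x∈ℕ*} γ(x) u(x)² is uniquely minimized by the function u* determined by u*(∞) = (∑_{x∈A} f(x)) / (n + ∑_{x∈ℕ*∖A} λγ(x)/(1 + λγ(x))) and u*(y) = u*(∞)/(1 + λγ(y)) for every y ∈ ℕ* ∖ A. -/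
open scoped ENNReal

/-- The quantity `∑_{x∈ℕ*} (u(x) − u(∞))² + λ ∑_{x∈ℕ*} γ(x) u(x)²`, computed in `ℝ≥0∞`
so that it is well defined (possibly infinite) for every `u`.  Here `u : ℕ → ℝ` is the
restriction of the function to the finite points and `uInf` its value at `∞`. -/
noncomputable def energy (γ : ℕ → ℝ) (lam : ℝ) (u : ℕ → ℝ) (uInf : ℝ) : ℝ≥0∞ :=
  ∑' x : ℕ, ENNReal.ofReal ((u x - uInf) ^ 2 + lam * γ x * (u x) ^ 2)

/-- The value at `∞` of the minimizer of Lemma 2.6. -/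
noncomputable def uStarInf (γ : ℕ → ℝ) (lam : ℝ) (A : Finset ℕ) (n : ℕ) (f : ℕ → ℝ) : ℝ :=
  (∑ x ∈ A, f x) /
    (n + ∑' x : ℕ, if x ∈ A then 0 else lam * γ x / (1 + lam * γ x))

/-- The minimizer of Lemma 2.6: it equals `f` on `A` and `u*(∞)/(1 + λγ(y))` off `A`. -/
noncomputable def uStar (γ : ℕ → ℝ) (lam : ℝ) (A : Finset ℕ) (n : ℕ) (f : ℕ → ℝ)
    (y : ℕ) : ℝ :=
  if y ∈ A then f y else uStarInf γ lam A n f / (1 + lam * γ y)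

/-! Write `b = λγ`. Completing the square at each `x ∉ A`,
`(u - c)² + b u² = (1 + b) (u - c/(1 + b))² + (b/(1 + b)) c²`,
so the energy of any `u` agreeing with `f` on `A` and with `u(∞) = c` is
`Φ(c) + ∑_{x ∉ A} (1 + b) (u x - c/(1 + b))²`, where
`Φ(c) = ∑_{x ∈ A} ((f x - c)² + b (f x)²) + S c²` and `S = ∑_{x ∉ A} b/(1 + b)`.
Since `Φ` is a quadratic in `c` with leading coefficient `n + S > 0`, it is minimized exactly at
`c = u*(∞) = (∑_A f)/(n + S)`, and the remaining sum vanishes exactly when `u = c/(1 + b)` off `A`. -/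

theorem sq_sub_add_mul_sq {K : Type*} [Field K] {b : K} (hb : 1 + b ≠ 0) (u c : K) :
    (u - c) ^ 2 + b * u ^ 2 = (1 + b) * (u - c / (1 + b)) ^ 2 + b / (1 + b) * c ^ 2 := by
  field_simp
  ring

theorem mul_sq_sub_nonpos_iff {a : ℝ} (ha : 0 < a) (x y : ℝ) : a * (x - y) ^ 2 ≤ 0 ↔ x = y := by
  rw [← mul_zero a, mul_le_mul_iff_of_pos_left ha, sq_nonpos_iff, sub_eq_zero]

theorem ENNReal.ofReal_add_add_eq_ofReal_iff {a d : ℝ} (ha : 0 ≤ a) (hd : 0 ≤ d) (r : ℝ≥0∞) :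
    ENNReal.ofReal (a + d) + r = ENNReal.ofReal a ↔ d ≤ 0 ∧ r = 0 := by
  rw [ENNReal.ofReal_add ha hd, add_assoc, ← ENNReal.ofReal_eq_zero, ← add_eq_zero]
  conv_lhs => rhs; rw [← add_zero (ENNReal.ofReal a)]
  exact ENNReal.add_right_inj ENNReal.ofReal_ne_top

section

variable (γ : ℕ → ℝ) (lam : ℝ) (A : Finset ℕ)

noncomputable def tailWeight : ℝ :=
  ∑' x : ℕ, if x ∈ A then 0 else lam * γ x / (1 + lam * γ x)

noncomputable def reducedEnergy (f : ℕ → ℝ) (c : ℝ) : ℝ :=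
  ∑ x ∈ A, ((f x - c) ^ 2 + lam * γ x * f x ^ 2) + c ^ 2 * tailWeight γ lam A

noncomputable def energyResidual (u : ℕ → ℝ) (c : ℝ) (x : ℕ) : ℝ :=
  if x ∈ A then 0 else (1 + lam * γ x) * (u x - c / (1 + lam * γ x)) ^ 2

variable {γ lam}

theorem tailWeight_summand_nonneg (hβ : ∀ x, 0 ≤ lam * γ x) (x : ℕ) :
    0 ≤ if x ∈ A then 0 else lam * γ x / (1 + lam * γ x) := by
  split_ifs
  exacts [le_rfl, div_nonneg (hβ x) (by linarith [hβ x])]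

theorem summable_tailWeight (hβ : ∀ x, 0 ≤ lam * γ x) (hγ : Summable γ) :
    Summable fun x => if x ∈ A then 0 else lam * γ x / (1 + lam * γ x) := by
  refine (hγ.mul_left lam).of_nonneg_of_le (tailWeight_summand_nonneg A hβ) (fun x => ?_)
  split_ifs
  exacts [hβ x, div_le_self (hβ x) (by linarith [hβ x])]

theorem tailWeight_nonneg (hβ : ∀ x, 0 ≤ lam * γ x) : 0 ≤ tailWeight γ lam A :=
  tsum_nonneg (tailWeight_summand_nonneg A hβ)

theorem reducedEnergy_nonneg (hβ : ∀ x, 0 ≤ lam * γ x) (f : ℕ → ℝ) (c : ℝ) :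
    0 ≤ reducedEnergy γ lam A f c :=
  add_nonneg (Finset.sum_nonneg fun x _ => by nlinarith [hβ x, sq_nonneg (f x - c)])
    (mul_nonneg (sq_nonneg _) (tailWeight_nonneg A hβ))

theorem energy_eq_ofReal_reducedEnergy_add (hβ : ∀ x, 0 ≤ lam * γ x) (hγ : Summable γ)
    {u f : ℕ → ℝ} (hu : ∀ x ∈ A, u x = f x) (c : ℝ) :
    energy γ lam u c = ENNReal.ofReal (reducedEnergy γ lam A f c) +
      ∑' x, ENNReal.ofReal (energyResidual γ lam A u c x) := by
  set p : ℕ → ℝ := fun x => if x ∈ A then (f x - c) ^ 2 + lam * γ x * f x ^ 2 else 0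
  set t : ℕ → ℝ := fun x => if x ∈ A then 0 else lam * γ x / (1 + lam * γ x)
  have hp : ∀ x, 0 ≤ p x := fun x => by
    simp only [p]; split_ifs <;> nlinarith [hβ x, sq_nonneg (f x - c), sq_nonneg (f x)]
  have hpt : ∀ x, 0 ≤ p x + c ^ 2 * t x := fun x =>
    add_nonneg (hp x) (mul_nonneg (sq_nonneg c) (tailWeight_summand_nonneg A hβ x))
  have hsplit : ∀ x, (u x - c) ^ 2 + lam * γ x * u x ^ 2 =
      p x + c ^ 2 * t x + energyResidual γ lam A u c x := by
    intro x
    by_cases hx : x ∈ A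
    · simp [p, t, energyResidual, hx, hu x hx]
    · simp only [p, t, energyResidual, if_neg hx]
      rw [sq_sub_add_mul_sq (by linarith [hβ x])]
      ring
  have hR : ∀ x, 0 ≤ energyResidual γ lam A u c x := fun x => by
    unfold energyResidual
    split_ifs
    exacts [le_rfl, mul_nonneg (by linarith [hβ x]) (sq_nonneg _)]
  have hsum_p : ∑' x, p x = ∑ x ∈ A, ((f x - c) ^ 2 + lam * γ x * f x ^ 2) :=
    (tsum_eq_sum fun x hx => if_neg hx).trans (Finset.sum_congr rfl fun x hx => if_pos hx)
  have hp_sum : Summable p := summable_of_ne_finset_zero fun x hx => if_neg hx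
  have ht_sum : Summable fun x => c ^ 2 * t x := (summable_tailWeight A hβ hγ).mul_left _
  have hsum : ∑' x, (p x + c ^ 2 * t x) = reducedEnergy γ lam A f c := by
    rw [hp_sum.tsum_add ht_sum, tsum_mul_left, hsum_p]
    rfl
  unfold energy
  simp_rw [hsplit, ENNReal.ofReal_add (hpt _) (hR _)]
  rw [ENNReal.tsum_add, ← ENNReal.ofReal_tsum_of_nonneg hpt (hp_sum.add ht_sum), hsum]

theorem tsum_ofReal_energyResidual_eq_zero_iff (hβ : ∀ x, 0 ≤ lam * γ x) (u : ℕ → ℝ) (c : ℝ) :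
    ∑' x, ENNReal.ofReal (energyResidual γ lam A u c x) = 0 ↔
      ∀ x ∉ A, u x = c / (1 + lam * γ x) := by
  simp only [ENNReal.tsum_eq_zero, ENNReal.ofReal_eq_zero]
  refine forall_congr' fun x => ?_
  by_cases hx : x ∈ A
  · simp [energyResidual, hx]
  · simp only [energyResidual, hx, not_false_eq_true, forall_const]
    exact mul_sq_sub_nonpos_iff (by linarith [hβ x]) _ _

theorem energy_uStar (hβ : ∀ x, 0 ≤ lam * γ x) (hγ : Summable γ) (n : ℕ) (f : ℕ → ℝ) :
    energy γ lam (uStar γ lam A n f) (uStarInf γ lam A n f) =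
      ENNReal.ofReal (reducedEnergy γ lam A f (uStarInf γ lam A n f)) := by
  rw [energy_eq_ofReal_reducedEnergy_add A hβ hγ (u := uStar γ lam A n f) (fun x hx => if_pos hx),
    (tsum_ofReal_energyResidual_eq_zero_iff A hβ (uStar γ lam A n f) _).2 fun x hx => if_neg hx,
    add_zero]

theorem reducedEnergy_eq_add_sq {n : ℕ} (hn : A.card = n)
    (hS : (n : ℝ) + tailWeight γ lam A ≠ 0) (f : ℕ → ℝ) (c : ℝ) :
    reducedEnergy γ lam A f c = reducedEnergy γ lam A f (uStarInf γ lam A n f) +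
      (n + tailWeight γ lam A) * (c - uStarInf γ lam A n f) ^ 2 := by
  have hc : uStarInf γ lam A n f * (n + tailWeight γ lam A) = ∑ x ∈ A, f x :=
    div_mul_cancel₀ _ hS
  have expand : ∀ d, reducedEnergy γ lam A f d = ∑ x ∈ A, (f x ^ 2 + lam * γ x * f x ^ 2)
      - 2 * d * ∑ x ∈ A, f x + n * d ^ 2 + d ^ 2 * tailWeight γ lam A := by
    intro d
    have : ∑ x ∈ A, ((f x - d) ^ 2 + lam * γ x * f x ^ 2) =
        ∑ x ∈ A, (f x ^ 2 + lam * γ x * f x ^ 2) + ∑ x ∈ A, (-2 * d) * f x + ∑ x ∈ A, d ^ 2 := by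
      rw [← Finset.sum_add_distrib, ← Finset.sum_add_distrib]
      exact Finset.sum_congr rfl fun x _ => by ring
    rw [reducedEnergy, this, ← Finset.mul_sum, Finset.sum_const, hn, nsmul_eq_mul]
    ring
  rw [expand, expand]
  linear_combination 2 * (c - uStarInf γ lam A n f) * hc

end

/-- among all `u ∈ D` with `u = f` on the finite set `A` (of cardinality `n`),
the quantity `∑_x (u(x) − u(∞))² + λ ∑_x γ(x) u(x)²` is uniquely minimized by the function
`u*` with `u*(∞) = (∑_{x∈A} f(x)) / (n + ∑_{x∉A} λγ(x)/(1+λγ(x)))` and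
`u*(y) = u*(∞)/(1 + λγ(y))` for `y ∉ A`. -/
theorem stmt_3 (γ : ℕ → ℝ) (hγpos : ∀ x, 0 < γ x) (hγsum : Summable γ)
    (lam : ℝ) (hlam : 0 < lam)
    (A : Finset ℕ) (hA : A.Nonempty) (n : ℕ) (hn : A.card = n) (f : ℕ → ℝ) :
    ∀ (u : ℕ → ℝ) (uInf : ℝ), (∀ x ∈ A, u x = f x) →
      (Summable fun x => (u x - uInf) ^ 2) →
      energy γ lam (uStar γ lam A n f) (uStarInf γ lam A n f) ≤ energy γ lam u uInf ∧
      (energy γ lam u uInf = energy γ lam (uStar γ lam A n f) (uStarInf γ lam A n f) →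
        u = uStar γ lam A n f ∧ uInf = uStarInf γ lam A n f) := by
  intro u c hu _
  have hβ : ∀ x, 0 ≤ lam * γ x := fun x => (mul_pos hlam (hγpos x)).le
  have hS : 0 < (n : ℝ) + tailWeight γ lam A := by
    have : (0 : ℝ) < n := by rw [← hn]; exact_mod_cast hA.card_pos
    linarith [tailWeight_nonneg A hβ]
  set cStar := uStarInf γ lam A n f
  have hgap : 0 ≤ (n + tailWeight γ lam A) * (c - cStar) ^ 2 := by positivity
  rw [energy_uStar A hβ hγsum, energy_eq_ofReal_reducedEnergy_add A hβ hγsum hu,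
    reducedEnergy_eq_add_sq A hn hS.ne' f c]
  refine ⟨le_add_right (ENNReal.ofReal_le_ofReal (le_add_of_nonneg_right hgap)), fun h => ?_⟩
  obtain ⟨hgap0, hres⟩ :=
    (ENNReal.ofReal_add_add_eq_ofReal_iff (reducedEnergy_nonneg A hβ f cStar) hgap _).1 h
  have hc : c = cStar := (mul_sq_sub_nonpos_iff hS _ _).1 hgap0
  refine ⟨funext fun x => ?_, hc⟩
  by_cases hx : x ∈ A
  · rw [hu x hx, uStar, if_pos hx]
  · rw [(tsum_ofReal_energyResidual_eq_zero_iff A hβ u c).1 hres x hx, uStar, if_neg hx, hc]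
end

section
/- For every α ∈ (0,1) and every θ > 0: ∫₀^∞ (1+t)^{−2} Λ⁰(θt) dt = c(θ), where Λ⁰(u) = (sin(πα)/π) ∫_{u/(1+u)}^{1} s^{−α}(1−s)^{α−1} ds for u ≥ 0, and c(θ) = (∫₀^∞ (w/(1+w))(w/(θ+w)) w^{−1−α} dw) / (∫₀^∞ (w/(1+w)) w^{−1−α} dw). -/
/-!
Substituting `s = v / (1 + v)` turns the arcsine law into a tail integral,
`Λ⁰(u) = (sin (π α) / π) ∫_u^∞ v^(-α) (1 + v)⁻¹ dv`, and at `u = 0` the Beta integral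
`B(1 - α, α) = Γ(1 - α) Γ(α) = π / sin (π α)` is the denominator of `c(θ)`.
Swapping the two integrals in `∫₀^∞ (1 + t)⁻² ∫_{θt}^∞ … dv dt` (Tonelli) leaves the inner
integral `∫₀^{v/θ} (1 + t)⁻² dt = v / (θ + v)`, which is the extra factor in the numerator.
-/

open MeasureTheory Set Real

/-- The distribution function of the generalized arcsine law with parameter `α`. -/
noncomputable def arcsineCDF (α u : ℝ) : ℝ :=
  (Real.sin (Real.pi * α) / Real.pi) *
    ∫ s in Set.Ioo (u / (1 + u)) 1, s ^ (-α) * (1 - s) ^ (α - 1)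

/-- The function `c(θ)` of the paper. -/
noncomputable def cFun (α θ : ℝ) : ℝ :=
  (∫ w in Set.Ioi (0:ℝ), (w / (1 + w)) * (w / (θ + w)) * w ^ (-1 - α)) /
    (∫ w in Set.Ioi (0:ℝ), (w / (1 + w)) * w ^ (-1 - α))

open scoped ENNReal

lemma image_div_one_add_Ioi {u : ℝ} (hu : -1 < u) :
    (fun v : ℝ => v / (1 + v)) '' Ioi u = Ioo (u / (1 + u)) 1 := by
  have h1u : 0 < 1 + u := by linarith
  ext y
  simp only [mem_image, mem_Ioi, mem_Ioo]
  constructor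
  · rintro ⟨v, hv, rfl⟩
    have h1v : 0 < 1 + v := by linarith
    refine ⟨?_, (div_lt_one h1v).mpr (by linarith)⟩
    rw [div_lt_div_iff₀ h1u h1v]
    linarith
  · rintro ⟨hy, hy1⟩
    have h1y : 0 < 1 - y := by linarith
    refine ⟨y / (1 - y), ?_, by field_simp; ring⟩
    rw [lt_div_iff₀ h1y]
    nlinarith [(div_lt_iff₀ h1u).mp hy]

lemma integral_Ioo_div_one_add_eq_integral_Ioi (α : ℝ) {u : ℝ} (hu : 0 ≤ u) :
    ∫ s in Ioo (u / (1 + u)) 1, s ^ (-α) * (1 - s) ^ (α - 1)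
      = ∫ v in Ioi u, v ^ (-α) * (1 + v)⁻¹ := by
  have hderiv : ∀ v ∈ Ioi u,
      HasDerivWithinAt (fun v : ℝ => v / (1 + v)) ((1 + v) ^ 2)⁻¹ (Ioi u) v := by
    intro v hv
    have h1v : 1 + v ≠ 0 := by linarith [hu.trans_lt hv]
    refine HasDerivAt.hasDerivWithinAt <|
      ((hasDerivAt_id' v).div ((hasDerivAt_id' v).const_add 1) h1v).congr_deriv ?_
    field_simp
    ring
  have hinj : InjOn (fun v : ℝ => v / (1 + v)) (Ioi u) := by
    intro x hx y hy hxy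
    have h1x : 1 + x ≠ 0 := by linarith [hu.trans_lt hx]
    have h1y : 1 + y ≠ 0 := by linarith [hu.trans_lt hy]
    field_simp at hxy
    linarith
  rw [← image_div_one_add_Ioi (by linarith),
    integral_image_eq_integral_abs_deriv_smul measurableSet_Ioi hderiv hinj]
  refine setIntegral_congr_fun measurableSet_Ioi fun v (hv : u < v) => ?_
  have hv0 : 0 < v := hu.trans_lt hv
  have h1v : 0 < 1 + v := by linarith
  have hsub : 1 - v / (1 + v) = (1 + v)⁻¹ := by field_simp; ring
  rw [smul_eq_mul, abs_of_pos (by positivity), hsub, div_rpow hv0.le h1v.le,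
    inv_rpow h1v.le, ← rpow_neg h1v.le, rpow_neg h1v.le α, div_eq_mul_inv, inv_inv]
  have hpow : (1 + v) ^ α * (1 + v) ^ (-(α - 1)) = 1 + v := by
    rw [← rpow_add h1v]; ring_nf; exact rpow_one _
  calc ((1 + v) ^ 2)⁻¹ * (v ^ (-α) * (1 + v) ^ α * (1 + v) ^ (-(α - 1)))
      = ((1 + v) ^ 2)⁻¹ * v ^ (-α) * ((1 + v) ^ α * (1 + v) ^ (-(α - 1))) := by ring
    _ = v ^ (-α) * (1 + v)⁻¹ := by rw [hpow]; field_simp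

lemma integral_Ioo_rpow_mul_one_sub_rpow {a b : ℝ} (ha : 0 < a) (hb : 0 < b) :
    ∫ s in Ioo (0:ℝ) 1, s ^ (a - 1) * (1 - s) ^ (b - 1) = Gamma a * Gamma b / Gamma (a + b) := by
  have hbeta : Complex.betaIntegral a b
      = ((∫ s in (0:ℝ)..1, s ^ (a - 1) * (1 - s) ^ (b - 1) : ℝ) : ℂ) := by
    rw [Complex.betaIntegral, ← intervalIntegral.integral_ofReal]
    refine intervalIntegral.integral_congr fun s hs => ?_
    rw [uIcc_of_le zero_le_one] at hs
    rw [Complex.ofReal_mul, Complex.ofReal_cpow hs.1, Complex.ofReal_cpow (by linarith [hs.2])]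
    push_cast
    rfl
  rw [← ProbabilityTheory.beta, ProbabilityTheory.beta_eq_betaIntegralReal a b ha hb, hbeta,
    Complex.ofReal_re, intervalIntegral.integral_of_le zero_le_one, integral_Ioc_eq_integral_Ioo]

lemma integral_rpow_neg_mul_inv_one_add {α : ℝ} (hα : α ∈ Ioo (0:ℝ) 1) :
    ∫ v in Ioi (0:ℝ), v ^ (-α) * (1 + v)⁻¹ = π / sin (π * α) := by
  obtain ⟨hα0, hα1⟩ := hα
  have hbeta := integral_Ioo_rpow_mul_one_sub_rpow (sub_pos.mpr hα1) hα0
  rw [sub_add_cancel, Gamma_one, div_one, mul_comm, Gamma_mul_Gamma_one_sub,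
    sub_sub_cancel_left] at hbeta
  simpa [← integral_Ioo_div_one_add_eq_integral_Ioi α le_rfl] using hbeta

/-- Integrable because its integral is the nonzero number `π / sin (π * α)`. -/
lemma integrableOn_rpow_neg_mul_inv_one_add {α : ℝ} (hα : α ∈ Ioo (0:ℝ) 1) :
    IntegrableOn (fun v : ℝ => v ^ (-α) * (1 + v)⁻¹) (Ioi 0) := by
  refine Integrable.of_integral_ne_zero ?_
  rw [integral_rpow_neg_mul_inv_one_add hα]
  exact (div_pos pi_pos (sin_pos_of_pos_of_lt_pi (by nlinarith [pi_pos, hα.1])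
    (by nlinarith [pi_pos, hα.2]))).ne'

lemma measurable_indicator_Ioi_mul_fst {β : Type*} [Zero β] [MeasurableSpace β] {g : ℝ → β}
    (hg : Measurable g) (θ : ℝ) :
    Measurable fun p : ℝ × ℝ => (Ioi (θ * p.1)).indicator g p.2 := by
  simp only [indicator, mem_Ioi]
  exact Measurable.ite (measurableSet_lt (measurable_fst.const_mul θ) measurable_snd)
    (hg.comp measurable_snd) measurable_const

lemma setLIntegral_Ioi_mul_tail_swap {f g : ℝ → ℝ≥0∞} (hf : Measurable f)
    (hg : Measurable g) {θ : ℝ} (hθ : 0 < θ) :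
    ∫⁻ t in Ioi 0, f t * ∫⁻ v in Ioi (θ * t), g v
      = ∫⁻ v in Ioi 0, (∫⁻ t in Ioo 0 (v / θ), f t) * g v := by
  set F : ℝ → ℝ → ℝ≥0∞ := fun t v => (Ioi 0).indicator f t * (Ioi (θ * t)).indicator g v
  have hF : Measurable (Function.uncurry F) :=
    ((hf.indicator measurableSet_Ioi).comp measurable_fst).mul
      (measurable_indicator_Ioi_mul_fst hg θ)
  have hF_swap : ∀ t v, F t v = (Ioo 0 (v / θ)).indicator f t * (Ioi 0).indicator g v := by
    intro t v
    simp only [F, indicator, mem_Ioi, mem_Ioo, lt_div_iff₀' hθ]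
    by_cases ht : 0 < t <;> by_cases hv : θ * t < v <;> simp [ht, hv]
    intro hv0
    nlinarith
  calc ∫⁻ t in Ioi 0, f t * ∫⁻ v in Ioi (θ * t), g v
      = ∫⁻ t, ∫⁻ v, F t v := by
        rw [← lintegral_indicator measurableSet_Ioi]
        refine lintegral_congr fun t => ?_
        rw [indicator_mul_left, lintegral_const_mul _ (hg.indicator measurableSet_Ioi),
          lintegral_indicator measurableSet_Ioi]
    _ = ∫⁻ v, ∫⁻ t, F t v := lintegral_lintegral_swap hF.aemeasurable
    _ = ∫⁻ v in Ioi 0, (∫⁻ t in Ioo 0 (v / θ), f t) * g v := by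
        rw [← lintegral_indicator measurableSet_Ioi]
        refine lintegral_congr fun v => ?_
        simp_rw [hF_swap]
        rw [indicator_mul_right, lintegral_mul_const _ (hf.indicator measurableSet_Ioo),
          lintegral_indicator measurableSet_Ioo]

lemma setIntegral_Ioi_mul_tail_swap {f g : ℝ → ℝ} (hf : Measurable f) (hg : Measurable g)
    (hf0 : ∀ t ∈ Ioi (0:ℝ), 0 ≤ f t) (hg0 : ∀ v ∈ Ioi (0:ℝ), 0 ≤ g v)
    (hfi : LocallyIntegrableOn f (Ici 0)) (hgi : IntegrableOn g (Ioi 0)) {θ : ℝ} (hθ : 0 < θ) :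
    ∫ t in Ioi 0, f t * ∫ v in Ioi (θ * t), g v
      = ∫ v in Ioi 0, (∫ t in Ioo 0 (v / θ), f t) * g v := by
  have hg_tail : ∀ t ∈ Ioi (0:ℝ), ENNReal.ofReal (∫ v in Ioi (θ * t), g v)
      = ∫⁻ v in Ioi (θ * t), ENNReal.ofReal (g v) := by
    intro t (ht : 0 < t)
    have hsub : Ioi (θ * t) ⊆ Ioi 0 := Ioi_subset_Ioi (by positivity)
    exact ofReal_integral_eq_lintegral_ofReal (hgi.mono_set hsub)
      ((ae_restrict_mem measurableSet_Ioi).mono fun v hv => hg0 v (hsub hv))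
  have hf_init : ∀ v, ENNReal.ofReal (∫ t in Ioo 0 (v / θ), f t)
      = ∫⁻ t in Ioo 0 (v / θ), ENNReal.ofReal (f t) := fun v =>
    ofReal_integral_eq_lintegral_ofReal
      ((hfi.integrableOn_compact_subset Icc_subset_Ici_self isCompact_Icc).mono_set
        Ioo_subset_Icc_self)
      ((ae_restrict_mem measurableSet_Ioo).mono fun t ht => hf0 t ht.1)
  have hf_init_nonneg : ∀ v, 0 ≤ ∫ t in Ioo 0 (v / θ), f t := fun v =>
    setIntegral_nonneg measurableSet_Ioo fun t ht => hf0 t ht.1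
  have hmeas_tail : Measurable fun t => ∫ v in Ioi (θ * t), g v := by
    simp_rw [← integral_indicator measurableSet_Ioi]
    exact (StronglyMeasurable.integral_prod_right (ν := volume)
      (f := fun t v => (Ioi (θ * t)).indicator g v)
      (measurable_indicator_Ioi_mul_fst hg θ).stronglyMeasurable).measurable
  have hmeas_init : Measurable fun v => ∫ t in Ioo 0 (v / θ), f t := by
    simp_rw [← integral_indicator measurableSet_Ioo]
    refine (StronglyMeasurable.integral_prod_right (ν := volume)
      (f := fun v t => (Ioo 0 (v / θ)).indicator f t) ?_).measurable
    refine Measurable.stronglyMeasurable ?_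
    simp only [Function.uncurry_def, indicator, mem_Ioo]
    exact Measurable.ite ((measurableSet_lt measurable_const measurable_snd).inter
      (measurableSet_lt measurable_snd (measurable_fst.div_const θ)))
      (hf.comp measurable_snd) measurable_const
  rw [integral_eq_lintegral_of_nonneg_ae, integral_eq_lintegral_of_nonneg_ae]
  · congr 1
    calc ∫⁻ t in Ioi 0, ENNReal.ofReal (f t * ∫ v in Ioi (θ * t), g v)
        = ∫⁻ t in Ioi 0, ENNReal.ofReal (f t) * ∫⁻ v in Ioi (θ * t), ENNReal.ofReal (g v) :=
          setLIntegral_congr_fun measurableSet_Ioi fun t ht => by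
            rw [ENNReal.ofReal_mul (hf0 t ht), hg_tail t ht]
      _ = ∫⁻ v in Ioi 0, (∫⁻ t in Ioo 0 (v / θ), ENNReal.ofReal (f t)) * ENNReal.ofReal (g v) :=
          setLIntegral_Ioi_mul_tail_swap hf.ennreal_ofReal hg.ennreal_ofReal hθ
      _ = ∫⁻ v in Ioi 0, ENNReal.ofReal ((∫ t in Ioo 0 (v / θ), f t) * g v) :=
          lintegral_congr fun v => by rw [ENNReal.ofReal_mul (hf_init_nonneg v), hf_init v]
  · exact (ae_restrict_mem measurableSet_Ioi).mono fun v hv =>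
      mul_nonneg (hf_init_nonneg v) (hg0 v hv)
  · exact (hmeas_init.mul hg).aestronglyMeasurable
  · exact (ae_restrict_mem measurableSet_Ioi).mono fun t (ht : 0 < t) => mul_nonneg (hf0 t ht)
      (setIntegral_nonneg measurableSet_Ioi fun v (hv : θ * t < v) =>
        hg0 v (lt_trans (by positivity) hv))
  · exact (hf.mul hmeas_tail).aestronglyMeasurable

lemma integral_Ioo_inv_one_add_sq {c : ℝ} (hc : 0 ≤ c) :
    ∫ t in Ioo 0 c, ((1 + t) ^ 2)⁻¹ = c / (1 + c) := by
  have hderiv : ∀ t ∈ uIcc 0 c, HasDerivAt (fun t : ℝ => -(1 + t)⁻¹) ((1 + t) ^ 2)⁻¹ t := by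
    intro t ht
    rw [uIcc_of_le hc] at ht
    have h1t : 1 + t ≠ 0 := by linarith [ht.1]
    refine (((hasDerivAt_id' t).const_add 1).inv h1t).neg.congr_deriv ?_
    ring
  have hcont : ContinuousOn (fun t : ℝ => ((1 + t) ^ 2)⁻¹) (uIcc 0 c) := by
    refine ContinuousOn.inv₀ (by fun_prop) fun t ht => ?_
    rw [uIcc_of_le hc] at ht
    have : 0 < 1 + t := by linarith [ht.1]
    positivity
  rw [← integral_Ioc_eq_integral_Ioo, ← intervalIntegral.integral_of_le hc,
    intervalIntegral.integral_eq_sub_of_hasDerivAt hderiv hcont.intervalIntegrable]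
  field_simp
  ring

lemma arcsineCDF_eq_integral_Ioi (α : ℝ) {u : ℝ} (hu : 0 ≤ u) :
    arcsineCDF α u = sin (π * α) / π * ∫ v in Ioi u, v ^ (-α) * (1 + v)⁻¹ := by
  rw [arcsineCDF, integral_Ioo_div_one_add_eq_integral_Ioi α hu]

lemma div_one_add_mul_rpow_neg_one_sub {w : ℝ} (hw : 0 < w) (α : ℝ) :
    w / (1 + w) * w ^ (-1 - α) = w ^ (-α) * (1 + w)⁻¹ := by
  rw [show -1 - α = -α - 1 by ring, rpow_sub_one hw.ne']
  field_simp

lemma cFun_eq {α : ℝ} (hα : α ∈ Ioo (0:ℝ) 1) (θ : ℝ) :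
    cFun α θ = sin (π * α) / π * ∫ v in Ioi 0, v / (θ + v) * (v ^ (-α) * (1 + v)⁻¹) := by
  have hden : ∫ w in Ioi (0:ℝ), w / (1 + w) * w ^ (-1 - α) = π / sin (π * α) := by
    rw [← integral_rpow_neg_mul_inv_one_add hα]
    exact setIntegral_congr_fun measurableSet_Ioi fun w hw =>
      div_one_add_mul_rpow_neg_one_sub hw α
  have hnum : ∫ w in Ioi (0:ℝ), w / (1 + w) * (w / (θ + w)) * w ^ (-1 - α)
      = ∫ v in Ioi 0, v / (θ + v) * (v ^ (-α) * (1 + v)⁻¹) :=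
    setIntegral_congr_fun measurableSet_Ioi fun w hw => by
      rw [← div_one_add_mul_rpow_neg_one_sub hw α]
      ring
  rw [cFun, hden, hnum, div_div_eq_mul_div]
  ring

/-- for every `α ∈ (0,1)` and `θ > 0`,
`∫₀^∞ (1+t)⁻² Λ⁰(θt) dt = c(θ)`. -/
theorem stmt_14 (α θ : ℝ) (hα : α ∈ Set.Ioo (0:ℝ) 1) (hθ : 0 < θ) :
    (∫ t in Set.Ioi (0:ℝ), ((1 + t) ^ 2)⁻¹ * arcsineCDF α (θ * t)) = cFun α θ := by
  set h : ℝ → ℝ := fun v => v ^ (-α) * (1 + v)⁻¹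
  have h_nonneg : ∀ v ∈ Ioi (0:ℝ), 0 ≤ h v := fun v (hv : 0 < v) => by positivity
  have hf_cont : ContinuousOn (fun t : ℝ => ((1 + t) ^ 2)⁻¹) (Ici 0) :=
    ContinuousOn.inv₀ (by fun_prop) fun t (ht : 0 ≤ t) => by positivity
  calc ∫ t in Ioi 0, ((1 + t) ^ 2)⁻¹ * arcsineCDF α (θ * t)
      = sin (π * α) / π * ∫ t in Ioi 0, ((1 + t) ^ 2)⁻¹ * ∫ v in Ioi (θ * t), h v := by
        rw [← integral_const_mul]
        refine setIntegral_congr_fun measurableSet_Ioi fun t (ht : 0 < t) => ?_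
        rw [arcsineCDF_eq_integral_Ioi α (by positivity)]
        ring
    _ = sin (π * α) / π * ∫ v in Ioi 0, (∫ t in Ioo 0 (v / θ), ((1 + t) ^ 2)⁻¹) * h v := by
        rw [setIntegral_Ioi_mul_tail_swap (by fun_prop) (by fun_prop)
          (fun t (ht : 0 < t) => by positivity) h_nonneg
          (hf_cont.locallyIntegrableOn measurableSet_Ici)
          (integrableOn_rpow_neg_mul_inv_one_add hα) hθ]
    _ = cFun α θ := by
        rw [cFun_eq hα θ]
        congr 1
        refine setIntegral_congr_fun measurableSet_Ioi fun v (hv : 0 < v) => ?_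
        rw [integral_Ioo_inv_one_add_sq (by positivity)]
        congr 1
        field_simp
end

section
/- Let φ, ψ : [0,∞) → ℝ be bounded, nondecreasing and right-continuous. If ∫₀^∞ (1+t)^{−2} φ(θt) dt = ∫₀^∞ (1+t)^{−2} ψ(θt) dt for every θ > 0, then φ(t) = ψ(t) for every t ≥ 0. In other words, the transform φ ↦ (θ ↦ ∫₀^∞ (1+t)^{−2} φ(θt) dt) uniquely determines a probability distribution function φ. -/
open MeasureTheory Set Filter Topology Polynomial

/-!
Substituting `s = θ t` turns the hypothesis into `∫₀^∞ (φ - ψ)(s) (θ + s)⁻² ds = 0` for all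
`θ > 0`. Differentiating in `θ` kills `∫₀^∞ (φ - ψ)(s) (θ + s)⁻ⁿ ds` for every `n ≥ 2`; at `θ = 1`
these are the moments of `(φ - ψ)(s) (1 + s)⁻²` against powers of `u = (1 + s)⁻¹ ∈ (0, 1)`.
By Weierstrass the integral against any continuous function of `u` vanishes, which covers every
compactly supported test function on `(0, ∞)`, so `φ = ψ` a.e. there, and right continuity
turns this into equality everywhere.
-/

lemma integrableOn_Ioi_inv_add_pow {c : ℝ} (hc : 0 < c) {n : ℕ} (hn : 2 ≤ n) :
    IntegrableOn (fun s : ℝ => ((c + s) ^ n)⁻¹) (Ioi 0) := by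
  have hn' : -(n : ℝ) < -1 := by
    have : (2 : ℝ) ≤ n := by exact_mod_cast hn
    linarith
  refine (integrableOn_add_rpow_Ioi_of_lt hn' (by linarith : -c < 0)).congr_fun
    (fun s hs => ?_) measurableSet_Ioi
  have : 0 < s + c := by linarith [mem_Ioi.1 hs]
  change (s + c) ^ (-(n : ℝ)) = _
  rw [Real.rpow_neg this.le, Real.rpow_natCast, add_comm]

lemma hasDerivAt_inv_add_pow (s : ℝ) (n : ℕ) {x : ℝ} (hx : x + s ≠ 0) :
    HasDerivAt (fun y => ((y + s) ^ n)⁻¹) (-n * ((x + s) ^ (n + 1))⁻¹) x := by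
  have := (hasDerivAt_zpow (-(n : ℤ)) (x + s) (.inl hx)).comp_add_const x s
  rw [show -(n : ℤ) - 1 = -((n + 1 : ℕ) : ℤ) by push_cast; ring] at this
  simpa only [zpow_neg, zpow_natCast, Int.cast_neg, Int.cast_natCast, neg_mul] using this

lemma HasCompactSupport.continuous_comp_inv {E : Type*} [NormedAddCommGroup E] {g : ℝ → E}
    (hg : Continuous g) (hgs : HasCompactSupport g) (h0 : g 0 = 0) :
    Continuous fun u => g u⁻¹ := by
  refine continuous_iff_continuousAt.2 fun u => ?_
  rcases eq_or_ne u 0 with rfl | hu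
  · rw [← continuousWithinAt_compl_self, ContinuousWithinAt, inv_zero, h0]
    exact hgs.is_zero_at_infty.comp
      (Metric.cobounded_eq_cocompact (α := ℝ) ▸ tendsto_inv₀_nhdsNE_zero)
  · exact hg.continuousAt.comp (continuousAt_inv₀ hu)

lemma integral_mul_comp_eq_zero_of_forall_polynomial {α : Type*} [MeasurableSpace α]
    {μ : Measure α} {g v : α → ℝ} (hg : Integrable g μ) (hv : AEStronglyMeasurable v μ)
    {a b : ℝ} (hvab : ∀ᵐ x ∂μ, v x ∈ Icc a b) (hpoly : ∀ p : ℝ[X], ∫ x, g x * p.eval (v x) ∂μ = 0)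
    {f : ℝ → ℝ} (hf : Continuous f) : ∫ x, g x * f (v x) ∂μ = 0 := by
  have hint : ∀ F : ℝ → ℝ, Continuous F → Integrable (fun x => g x * F (v x)) μ := by
    intro F hF
    obtain ⟨B, hB⟩ := isCompact_Icc.exists_bound_of_continuousOn hF.continuousOn
    exact hg.mul_bdd (hF.comp_aestronglyMeasurable hv) (hvab.mono fun x hx => hB _ hx)
  refine norm_le_zero_iff.1 (le_of_forall_pos_le_add fun ε hε => ?_)
  set K := ∫ x, ‖g x‖ ∂μ
  have hK : 0 ≤ K := integral_nonneg fun _ => norm_nonneg _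
  obtain ⟨p, hp⟩ :=
    exists_polynomial_near_of_continuousOn a b f hf.continuousOn (ε / (K + 1)) (by positivity)
  calc ‖∫ x, g x * f (v x) ∂μ‖ = ‖∫ x, g x * (f (v x) - p.eval (v x)) ∂μ‖ := by
        simp_rw [mul_sub]; rw [integral_sub (hint f hf) (hint _ p.continuous), hpoly, sub_zero]
    _ ≤ ∫ x, ‖g x‖ * (ε / (K + 1)) ∂μ := by
        refine norm_integral_le_of_norm_le (hg.norm.mul_const _) (hvab.mono fun x hx => ?_)
        rw [norm_mul, Real.norm_eq_abs (_ - _), abs_sub_comm]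
        gcongr
        exact (hp _ hx).le
    _ = K * (ε / (K + 1)) := integral_mul_const _ _
    _ ≤ 0 + ε := by
        rw [zero_add, ← mul_div_assoc, div_le_iff₀ (by positivity)]
        nlinarith

section BoundedOnIoi

variable {h : ℝ → ℝ} {C : ℝ}

lemma integrableOn_Ioi_mul_inv_add_pow (hm : AEStronglyMeasurable h (volume.restrict (Ioi 0)))
    (hC : ∀ᵐ s ∂volume.restrict (Ioi 0), ‖h s‖ ≤ C) {c : ℝ} (hc : 0 < c) {n : ℕ} (hn : 2 ≤ n) :
    IntegrableOn (fun s => h s * ((c + s) ^ n)⁻¹) (Ioi 0) :=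
  (integrableOn_Ioi_inv_add_pow hc hn).bdd_mul hm hC

lemma hasDerivAt_integral_mul_inv_add_pow
    (hm : AEStronglyMeasurable h (volume.restrict (Ioi 0)))
    (hC : ∀ᵐ s ∂volume.restrict (Ioi 0), ‖h s‖ ≤ C) {θ : ℝ} (hθ : 0 < θ) {n : ℕ} (hn : 2 ≤ n) :
    HasDerivAt (fun x => ∫ s in Ioi 0, h s * ((x + s) ^ n)⁻¹)
      (-n * ∫ s in Ioi 0, h s * ((θ + s) ^ (n + 1))⁻¹) θ := by
  have hball : Metric.ball θ (θ / 2) ⊆ Ioi (θ / 2) := fun x hx => by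
    rw [Metric.mem_ball, Real.dist_eq, abs_sub_lt_iff] at hx
    exact mem_Ioi.2 (by linarith)
  have key := hasDerivAt_integral_of_dominated_loc_of_deriv_le
    (F := fun x s => h s * ((x + s) ^ n)⁻¹)
    (F' := fun x s => h s * (-n * ((x + s) ^ (n + 1))⁻¹))
    (bound := fun s => C * (n * ((θ / 2 + s) ^ (n + 1))⁻¹))
    (Metric.ball_mem_nhds θ (half_pos hθ)) (.of_forall fun _ => hm.mul (by fun_prop))
    (integrableOn_Ioi_mul_inv_add_pow hm hC hθ hn)
    (hm.mul (by fun_prop)) ?_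
    (((integrableOn_Ioi_inv_add_pow (half_pos hθ) (by omega : 2 ≤ n + 1)).const_mul _).const_mul _)
    ?_
  · simpa only [mul_left_comm (h _), integral_const_mul] using key.2
  · filter_upwards [hC, ae_restrict_mem measurableSet_Ioi] with s hs hs0 x hx
    have hx := hball hx
    have h1 : 0 < θ / 2 + s := by linarith [mem_Ioi.1 hs0]
    have h2 : θ / 2 + s ≤ x + s := by linarith [mem_Ioi.1 hx]
    have h3 : 0 < x + s := h1.trans_le h2
    rw [norm_mul, norm_mul, norm_neg, Real.norm_natCast, norm_inv, norm_pow,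
      Real.norm_of_nonneg h3.le]
    refine mul_le_mul hs ?_ (by positivity) ((norm_nonneg _).trans hs)
    exact mul_le_mul_of_nonneg_left (inv_anti₀ (pow_pos h1 _) (pow_le_pow_left₀ h1.le h2 _))
      n.cast_nonneg
  · filter_upwards [ae_restrict_mem measurableSet_Ioi] with s hs0 x hx
    have hx := hball hx
    exact (hasDerivAt_inv_add_pow s n (by linarith [mem_Ioi.1 hs0, mem_Ioi.1 hx])).const_mul (h s)

lemma integral_mul_inv_add_pow_eq_zero (hm : AEStronglyMeasurable h (volume.restrict (Ioi 0)))
    (hC : ∀ᵐ s ∂volume.restrict (Ioi 0), ‖h s‖ ≤ C)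
    (h0 : ∀ θ : ℝ, 0 < θ → ∫ s in Ioi 0, h s * ((θ + s) ^ 2)⁻¹ = 0)
    {n : ℕ} (hn : 2 ≤ n) {θ : ℝ} (hθ : 0 < θ) :
    ∫ s in Ioi 0, h s * ((θ + s) ^ n)⁻¹ = 0 := by
  induction n, hn using Nat.le_induction generalizing θ with
  | base => exact h0 θ hθ
  | succ n hn ih =>
    have hzero : HasDerivAt (fun x => ∫ s in Ioi 0, h s * ((x + s) ^ n)⁻¹) 0 θ :=
      (hasDerivAt_const θ 0).congr_of_eventuallyEq
        ((eventually_gt_nhds hθ).mono fun x hx => ih hx)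
    have := (hasDerivAt_integral_mul_inv_add_pow hm hC hθ hn).unique hzero
    simpa [show (n : ℝ) ≠ 0 by positivity] using this

lemma integral_mul_inv_one_add_sq_mul_comp_eq_zero
    (hm : AEStronglyMeasurable h (volume.restrict (Ioi 0)))
    (hC : ∀ᵐ s ∂volume.restrict (Ioi 0), ‖h s‖ ≤ C)
    (h0 : ∀ θ : ℝ, 0 < θ → ∫ s in Ioi 0, h s * ((θ + s) ^ 2)⁻¹ = 0)
    {f : ℝ → ℝ} (hf : Continuous f) :
    ∫ s in Ioi 0, h s * ((1 + s) ^ 2)⁻¹ * f (1 + s)⁻¹ = 0 := by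
  refine integral_mul_comp_eq_zero_of_forall_polynomial
    (integrableOn_Ioi_mul_inv_add_pow hm hC one_pos le_rfl) (by fun_prop) (a := 0) (b := 1) ?_
    (fun p => ?_) hf
  · filter_upwards [ae_restrict_mem measurableSet_Ioi] with s hs
    have : 0 < s := hs
    exact ⟨by positivity, inv_le_one_of_one_le₀ (by linarith)⟩
  have hterm : ∀ s ∈ Ioi (0 : ℝ), h s * ((1 + s) ^ 2)⁻¹ * p.eval (1 + s)⁻¹ =
      ∑ i ∈ Finset.range (p.natDegree + 1), p.coeff i * (h s * ((1 + s) ^ (i + 2))⁻¹) := by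
    intro s _
    rw [eval_eq_sum_range, Finset.mul_sum]
    refine Finset.sum_congr rfl fun i _ => ?_
    rw [pow_add, mul_inv, inv_pow]
    ring
  rw [setIntegral_congr_fun measurableSet_Ioi hterm, integral_finsetSum _ fun i _ =>
    (integrableOn_Ioi_mul_inv_add_pow hm hC one_pos (by omega)).const_mul _]
  refine Finset.sum_eq_zero fun i _ => ?_
  rw [integral_const_mul, integral_mul_inv_add_pow_eq_zero hm hC h0 (by omega) one_pos, mul_zero]

theorem ae_eq_zero_of_integral_mul_inv_add_sq_eq_zero
    (hm : AEStronglyMeasurable h (volume.restrict (Ioi 0)))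
    (hC : ∀ᵐ s ∂volume.restrict (Ioi 0), ‖h s‖ ≤ C)
    (h0 : ∀ θ : ℝ, 0 < θ → ∫ s in Ioi 0, h s * ((θ + s) ^ 2)⁻¹ = 0) :
    ∀ᵐ s, 0 < s → h s = 0 := by
  have hloc : LocallyIntegrableOn (fun s => h s * ((1 + s) ^ 2)⁻¹) (Ioi 0) :=
    (integrableOn_Ioi_mul_inv_add_pow hm hC one_pos le_rfl).locallyIntegrableOn
  have := isOpen_Ioi.ae_eq_zero_of_integral_contDiff_smul_eq_zero hloc fun g hg hgs hgU => ?_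
  · filter_upwards [this] with s hs hs0
    have : (1 + s) ^ 2 ≠ 0 := by positivity
    simpa [this] using hs hs0
  -- under `u = (1 + s)⁻¹` the test function `g` becomes `u ↦ g (u⁻¹ - 1)`
  have hf : Continuous fun u => g (u⁻¹ - 1) :=
    HasCompactSupport.continuous_comp_inv (g := fun x => g (x - 1)) (by fun_prop)
      (hgs.comp_isClosedEmbedding (Homeomorph.subRight 1).isClosedEmbedding)
      (image_eq_zero_of_notMem_tsupport fun hmem => absurd (hgU hmem) (by norm_num))
  rw [← setIntegral_eq_integral_of_forall_compl_eq_zero fun s hs => by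
      rw [image_eq_zero_of_notMem_tsupport fun hmem => hs (hgU hmem), zero_smul]]
  refine (setIntegral_congr_fun measurableSet_Ioi fun s _ => ?_).trans
    (integral_mul_inv_one_add_sq_mul_comp_eq_zero hm hC h0 hf)
  simp only [smul_eq_mul, inv_inv, add_sub_cancel_left]
  ring

end BoundedOnIoi

lemma integral_Ioi_inv_one_add_sq_mul_comp_mul_left (f : ℝ → ℝ) {θ : ℝ} (hθ : 0 < θ) :
    ∫ t in Ioi 0, ((1 + t) ^ 2)⁻¹ * f (θ * t) = θ * ∫ s in Ioi 0, f s * ((θ + s) ^ 2)⁻¹ := by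
  calc ∫ t in Ioi 0, ((1 + t) ^ 2)⁻¹ * f (θ * t)
      = ∫ t in Ioi 0, θ ^ 2 * (f (θ * t) * ((θ + θ * t) ^ 2)⁻¹) := by
        refine setIntegral_congr_fun measurableSet_Ioi fun t ht => ?_
        have : 1 + t ≠ 0 := by have : (0 : ℝ) < t := ht; positivity
        field_simp
    _ = θ ^ 2 * (θ⁻¹ * ∫ s in Ioi 0, f s * ((θ + s) ^ 2)⁻¹) := by
        rw [integral_const_mul, integral_comp_mul_left_Ioi (fun s => f s * ((θ + s) ^ 2)⁻¹) 0 hθ,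
          mul_zero, smul_eq_mul]
    _ = θ * ∫ s in Ioi 0, f s * ((θ + s) ^ 2)⁻¹ := by
        field_simp

lemma eq_of_continuousWithinAt_Ici_of_ae_eq {f g : ℝ → ℝ} {t : ℝ}
    (hf : ContinuousWithinAt f (Ici t) t) (hg : ContinuousWithinAt g (Ici t) t)
    (hfg : ∀ᵐ x, t < x → f x = g x) : f t = g t := by
  by_contra hne
  have hev : ∀ᶠ x in 𝓝[>] t, f x - g x ≠ 0 :=
    ((hf.sub hg).mono Ioi_subset_Ici_self).eventually_ne (sub_ne_zero.2 hne)
  obtain ⟨b, hb, hsub⟩ := mem_nhdsGT_iff_exists_Ioo_subset.1 hev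
  have hnull : volume {x | ¬(t < x → f x = g x)} = 0 := ae_iff.1 hfg
  have hIoo : Ioo t b ⊆ {x | ¬(t < x → f x = g x)} := fun x hx himp =>
    hsub hx (sub_eq_zero.2 (himp hx.1))
  have := measure_mono_null hIoo hnull
  rw [Real.volume_Ioo, ENNReal.ofReal_eq_zero] at this
  linarith [mem_Ioi.1 hb]

/-- the transform `φ ↦ (θ ↦ ∫₀^∞ (1+t)⁻² φ(θt) dt)` determines a bounded,
nondecreasing, right-continuous function on `[0,∞)` uniquely. -/
theorem stmt_15 (φ ψ : ℝ → ℝ)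
    (hφbdd : ∃ M : ℝ, ∀ t : ℝ, 0 ≤ t → |φ t| ≤ M)
    (hψbdd : ∃ M : ℝ, ∀ t : ℝ, 0 ≤ t → |ψ t| ≤ M)
    (hφmono : MonotoneOn φ (Set.Ici (0:ℝ)))
    (hψmono : MonotoneOn ψ (Set.Ici (0:ℝ)))
    (hφrc : ∀ t : ℝ, 0 ≤ t → ContinuousWithinAt φ (Set.Ici t) t)
    (hψrc : ∀ t : ℝ, 0 ≤ t → ContinuousWithinAt ψ (Set.Ici t) t)
    (heq : ∀ θ : ℝ, 0 < θ →
      (∫ t in Set.Ioi (0:ℝ), ((1 + t) ^ 2)⁻¹ * φ (θ * t))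
        = ∫ t in Set.Ioi (0:ℝ), ((1 + t) ^ 2)⁻¹ * ψ (θ * t)) :
    ∀ t : ℝ, 0 ≤ t → φ t = ψ t := by
  obtain ⟨M, hM⟩ := hφbdd
  obtain ⟨N, hN⟩ := hψbdd
  have hφm : AEStronglyMeasurable φ (volume.restrict (Ioi 0)) :=
    (aemeasurable_restrict_of_monotoneOn measurableSet_Ioi
      (hφmono.mono Ioi_subset_Ici_self)).aestronglyMeasurable
  have hψm : AEStronglyMeasurable ψ (volume.restrict (Ioi 0)) :=
    (aemeasurable_restrict_of_monotoneOn measurableSet_Ioi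
      (hψmono.mono Ioi_subset_Ici_self)).aestronglyMeasurable
  have hφC : ∀ᵐ s ∂volume.restrict (Ioi 0), ‖φ s‖ ≤ M :=
    ae_restrict_of_forall_mem measurableSet_Ioi fun s hs => hM s (le_of_lt hs)
  have hψC : ∀ᵐ s ∂volume.restrict (Ioi 0), ‖ψ s‖ ≤ N :=
    ae_restrict_of_forall_mem measurableSet_Ioi fun s hs => hN s (le_of_lt hs)
  have hzero : ∀ θ : ℝ, 0 < θ → ∫ s in Ioi 0, (φ - ψ) s * ((θ + s) ^ 2)⁻¹ = 0 := by
    intro θ hθ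
    have hθeq := heq θ hθ
    rw [integral_Ioi_inv_one_add_sq_mul_comp_mul_left φ hθ,
      integral_Ioi_inv_one_add_sq_mul_comp_mul_left ψ hθ] at hθeq
    simp_rw [Pi.sub_apply, sub_mul]
    rw [integral_sub (integrableOn_Ioi_mul_inv_add_pow hφm hφC hθ le_rfl)
      (integrableOn_Ioi_mul_inv_add_pow hψm hψC hθ le_rfl), mul_left_cancel₀ hθ.ne' hθeq, sub_self]
  have hae := ae_eq_zero_of_integral_mul_inv_add_sq_eq_zero (hφm.sub hψm)
    (by filter_upwards [hφC, hψC] with s h1 h2 using (norm_sub_le _ _).trans (add_le_add h1 h2))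
    hzero
  intro t ht
  refine eq_of_continuousWithinAt_Ici_of_ae_eq (hφrc t ht) (hψrc t ht) ?_
  filter_upwards [hae] with x hx htx using sub_eq_zero.1 (hx (ht.trans_lt htx))
end
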